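/- Let M be a non-trivial connected matroid on ground set E and f ∈ E. Then M is parallel irreducible at f if and only if the contraction M/f is connected. -/

import Mathlib

open Polynomial

namespace SPPaper

noncomputable section
open Classical

universe u
variable {α : Type u} {V : Type u}

/-- Deletion of a set of elements: `M − X`. -/
def del (M : Matroid α) (X : Set α) : Matroid α := M.restrict (M.E \ X)

/-- Contraction of a set of elements: `M/X = (M✶ − X)✶`. -/
def con (M : Matroid α) (X : Set α) : Matroid α := (del M.dual X).dual

/-- The rank of a set: the (common) cardinality of maximal independent subsets. -/
def rk (M : Matroid α) (X : Set α) : ℕ :=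
  sSup {n | ∃ I, I ⊆ X ∧ M.Indep I ∧ I.ncard = n}

/-- The rank of a matroid. -/
def rank (M : Matroid α) : ℕ := rk M M.E

/-- `e` is a loop of `M` if `{e}` is dependent. -/
def IsLoop (M : Matroid α) (e : α) : Prop := e ∈ M.E ∧ ¬ M.Indep {e}

/-- A matroid is loopless if it has no loops. -/
def Loopless (M : Matroid α) : Prop := ∀ e, ¬ IsLoop M e

/-- `e` is a coloop of `M` if it lies in every basis. -/
def IsColoop (M : Matroid α) (e : α) : Prop := e ∈ M.E ∧ ∀ B, M.IsBase B → e ∈ B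

/-- A circuit of a matroid: a minimal dependent set. -/
def IsCircuit (M : Matroid α) (C : Set α) : Prop := M.Dep C ∧ ∀ D, D ⊂ C → M.Indep D

/-- A matroid is simple if it has no loops and no two-element circuits. -/
def Simple (M : Matroid α) : Prop := Loopless M ∧ ∀ e f : α, ¬ IsCircuit M {e, f}

/-- `h(M;x) = t(M;x,0)` where `t` is the Tutte polynomial:
`t(M;x,y) = ∑_{A ⊆ E} (x−1)^(r(E)−r(A)) (y−1)^(|A|−r(A))`. -/
def hPoly (M : Matroid α) [Fintype α] : Polynomial ℤ :=
  ∑ A ∈ (Set.toFinite M.E).toFinset.powerset,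
    (Polynomial.X - 1) ^ (rank M - rk M (A : Set α)) *
      (-1 : Polynomial ℤ) ^ (A.card - rk M (A : Set α))

/-- The `i`-th entry of the h-vector of the broken circuit complex:
`h(M;x) = ∑_{i=0}^r h_i x^(r−i)`. -/
def hvec (M : Matroid α) [Fintype α] (i : ℕ) : ℤ :=
  if i ≤ rank M then (hPoly M).coeff (rank M - i) else 0

/-- The beta invariant `β(M) = (−1)^(r(E)) ∑_{A ⊆ E} (−1)^(|A|) r(A)`. -/
def beta (M : Matroid α) [Fintype α] : ℤ :=
  (-1) ^ rank M *
    ∑ A ∈ (Set.toFinite M.E).toFinset.powerset, (-1 : ℤ) ^ A.card * (rk M (A : Set α) : ℤ)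

/-- `P` is the direct sum of `M1` and `M2`. -/
def IsDirSumOf (P M1 M2 : Matroid α) : Prop :=
  ∃ h : Disjoint M1.E M2.E, P = Matroid.disjointSum M1 M2 h

/-- A matroid is connected if its ground set is nonempty and it is not the direct sum
of two matroids on nonempty ground sets. -/
def Connected (M : Matroid α) : Prop :=
  M.E.Nonempty ∧ ¬ ∃ M1 M2 : Matroid α, M1.E.Nonempty ∧ M2.E.Nonempty ∧ IsDirSumOf M M1 M2

/-- `M` is the matroid on ground set `E` whose circuits are exactly the sets satisfying `𝒞`. -/
def HasCircuits (M : Matroid α) (E : Set α) (𝒞 : Set α → Prop) : Prop :=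
  M.E = E ∧ ∀ C, IsCircuit M C ↔ 𝒞 C

/-- The circuits of the parallel connection of `M1` and `M2` with basepoint `e`. -/
def PConnCircuit (M1 M2 : Matroid α) (e : α) (C : Set α) : Prop :=
  IsCircuit M1 C ∨ IsCircuit M2 C ∨
    ∃ C1 C2, IsCircuit M1 C1 ∧ IsCircuit M2 C2 ∧ e ∈ C1 ∧ e ∈ C2 ∧ C = (C1 ∪ C2) \ {e}

/-- The circuits of the series connection of `M1` and `M2` with basepoint `e`. -/
def SConnCircuit (M1 M2 : Matroid α) (e : α) (C : Set α) : Prop :=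
  IsCircuit (del M1 {e}) C ∨ IsCircuit (del M2 {e}) C ∨
    ∃ C1 C2, IsCircuit M1 C1 ∧ IsCircuit M2 C2 ∧ e ∈ C1 ∧ e ∈ C2 ∧ C = C1 ∪ C2

/-- `P` is the parallel connection of `M1` and `M2` with respect to the basepoint `e`
(including the degenerate conventions when `e` is a loop or a coloop). -/
def IsParallelConn (P M1 M2 : Matroid α) (e : α) : Prop :=
  if IsLoop M1 e then IsDirSumOf P M1 (con M2 {e})
  else if IsColoop M1 e then IsDirSumOf P (del M1 {e}) M2
  else if IsLoop M2 e then IsDirSumOf P (con M1 {e}) M2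
  else if IsColoop M2 e then IsDirSumOf P M1 (del M2 {e})
  else HasCircuits P (M1.E ∪ M2.E) (PConnCircuit M1 M2 e)

/-- `S` is the series connection of `M1` and `M2` with respect to the basepoint `e`
(including the degenerate conventions when `e` is a loop or a coloop). -/
def IsSeriesConn (S M1 M2 : Matroid α) (e : α) : Prop :=
  if IsLoop M1 e then IsDirSumOf S (con M1 {e}) M2
  else if IsColoop M1 e then IsDirSumOf S M1 (del M2 {e})
  else if IsLoop M2 e then IsDirSumOf S M1 (con M2 {e})
  else if IsColoop M2 e then IsDirSumOf S (del M1 {e}) M2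
  else HasCircuits S (M1.E ∪ M2.E) (SConnCircuit M1 M2 e)

/-- `N` is a two-element circuit. -/
def TwoCircuit (N : Matroid α) : Prop :=
  ∃ e f : α, e ≠ f ∧ N.E = {e, f} ∧ IsCircuit N N.E

/-- `M` is a series extension of `N`: `M = S(N, C₂)` for a 2-circuit `C₂`. -/
def IsSeriesExtOf (M N : Matroid α) : Prop :=
  ∃ (C : Matroid α) (e : α), TwoCircuit C ∧ N.E ∩ C.E = {e} ∧ IsSeriesConn M N C e

/-- `M` is a parallel extension of `N`: `M = P(N, C₂)` for a 2-circuit `C₂`. -/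
def IsParallelExtOf (M N : Matroid α) : Prop :=
  ∃ (C : Matroid α) (e : α), TwoCircuit C ∧ N.E ∩ C.E = {e} ∧ IsParallelConn M N C e

/-- A series-parallel network: a matroid obtainable from a coloop by a sequence of
series and parallel extensions. -/
inductive IsSPNetwork : Matroid α → Prop
  | coloop (M : Matroid α) (e : α) : M.E = {e} → IsColoop M e → IsSPNetwork M
  | series (M N : Matroid α) : IsSPNetwork N → IsSeriesExtOf M N → IsSPNetwork M
  | parallel (M N : Matroid α) : IsSPNetwork N → IsParallelExtOf M N → IsSPNetwork M

/-- `M` is parallel irreducible at `f`: either `M` is trivial or `M` is not the parallel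
connection, with basepoint `f`, of two matroids each having at least two elements. -/
def ParallelIrreducibleAt (M : Matroid α) (f : α) : Prop :=
  M.E.Subsingleton ∨
    ¬ ∃ M1 M2 : Matroid α, M1.E ∩ M2.E = {f} ∧ M1.E.Nontrivial ∧ M2.E.Nontrivial ∧
        IsParallelConn M M1 M2 f

/-- `M` is parallel irreducible. -/
def ParallelIrreducible (M : Matroid α) : Prop := ∀ f ∈ M.E, ParallelIrreducibleAt M f

/-- `M` is the iterated parallel connection of the list `l` of matroids. -/
inductive IsIterPConn : Matroid α → List (Matroid α) → Prop
  | base (M : Matroid α) : IsIterPConn M [M]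
  | step (P M N : Matroid α) (l : List (Matroid α)) (e : α) :
      IsIterPConn P l → P.E ∩ N.E = {e} → IsParallelConn M P N e →
      IsIterPConn M (l ++ [N])

/-- `M` is the cycle matroid of the graph `G` (on the ground set `G.edgeSet`):
a set of edges is independent iff it contains no cycle. -/
def IsCycleMatroid (M : Matroid (Sym2 V)) (G : SimpleGraph V) : Prop :=
  M.E = G.edgeSet ∧ ∀ X ⊆ M.E, (M.Indep X ↔ (SimpleGraph.fromEdgeSet X).IsAcyclic)

/-- `M` is (isomorphic to) the cycle matroid of the graph `G`. -/
def IsCycleMatroidOf (M : Matroid α) {W : Type} (G : SimpleGraph W) : Prop :=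
  ∃ φ : α → Sym2 W, Set.InjOn φ M.E ∧ φ '' M.E = G.edgeSet ∧
    ∀ X ⊆ M.E, (M.Indep X ↔ (SimpleGraph.fromEdgeSet (φ '' X)).IsAcyclic)

/-- A matroid is graphic if it is isomorphic to the cycle matroid of a graph. -/
def IsGraphic (M : Matroid α) : Prop := ∃ (W : Type) (G : SimpleGraph W), IsCycleMatroidOf M G

/-- A nonempty set of elements, each lying in some circuit, such that every circuit of `M`
containing one of them contains all of them. -/
def SeriesSet (M : Matroid α) (X : Set α) : Prop :=
  X ⊆ M.E ∧ X.Nonempty ∧ (∀ e ∈ X, ∃ C, IsCircuit M C ∧ e ∈ C) ∧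
    ∀ C, IsCircuit M C → X ⊆ C ∨ Disjoint X C

/-- A series class: a maximal `SeriesSet`. -/
def SeriesClass (M : Matroid α) (X : Set α) : Prop :=
  SeriesSet M X ∧ ∀ Y, SeriesSet M Y → X ⊆ Y → X = Y

/-- A removable line of a block `G` (with cycle matroid `M`): a line (a nontrivial path
all of whose internal vertices have degree 2) whose removal (edges together with the
internal vertices) leaves a block. -/
def IsRemovableLine (G : SimpleGraph V) (M : Matroid (Sym2 V)) (X : Set (Sym2 V)) : Prop :=
  ∃ (u v : V) (p : G.Walk u v), p.IsPath ∧ 0 < p.length ∧ X = {e | e ∈ p.edges} ∧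
    (∀ w ∈ p.support, w ≠ u → w ≠ v → (G.neighborSet w).ncard = 2) ∧
    ((G.deleteEdges X).induce {w : V | ¬ (w ∈ p.support ∧ w ≠ u ∧ w ≠ v)}).Connected ∧
    Connected (del M X)

/-- One subdivision step: replace an edge `uv` by a path `u-w-v` through a new vertex `w`. -/
def SubdivStep (G G' : SimpleGraph V) : Prop :=
  ∃ u v w : V, G.Adj u v ∧ w ∉ G.support ∧ w ≠ u ∧ w ≠ v ∧
    G' = SimpleGraph.fromEdgeSet ((G.edgeSet \ {s(u, v)}) ∪ {s(u, w), s(w, v)})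

/-- `H` is a subdivision of the complete graph `K₄`. -/
def IsSubdivOfK4 (H : SimpleGraph V) : Prop :=
  ∃ f : Fin 4 ↪ V,
    Relation.ReflTransGen SubdivStep
      (SimpleGraph.fromEdgeSet {s | ∃ i j : Fin 4, i ≠ j ∧ s = s(f i, f j)}) H


end

end SPPaper

/-!
In a connected matroid with at least two elements, `f` is not a loop. Suppose every circuit of
`N = M ／ {f}` lies in `A` or in `B`, where `A, B` partition `E - f`. A circuit of `M` through
`f` then lies in `f + A` or in `f + B`. A circuit `C` avoiding `f` and meeting both sides has
`f ∈ cl (C ∩ A)` and `f ∈ cl (C ∩ B)`; two distinct circuits through `f` inside `f + C` would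
eliminate `f` to a circuit properly inside `C`, so `f + (C ∩ A)` and `f + (C ∩ B)` are
circuits whose union minus `f` is `C`. Conversely such a union is always a circuit. These are
exactly the circuits of the parallel connection of `M | (f + A)` and `M | (f + B)` at `f`, and
connectivity of `M` puts `f` in the closure of `A` and of `B`, so `f` is neither a loop nor a
coloop of either part.

Conversely, for a parallel connection at `f`, a circuit of `N` lifts to a circuit of `M` inside
it plus `f`. A lift `(C₁ ∪ C₂) - f` would properly contain the circuit `C₂ - f` of `N`, so every
lift lies in one part and `N` splits along the two parts.
-/

lemma Set.Nontrivial.sdiff_singleton_nonempty {α : Type*} {s : Set α} (hs : s.Nontrivial)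
    (a : α) : (s \ {a}).Nonempty :=
  let ⟨x, hx, hxa⟩ := hs.exists_ne a
  ⟨x, hx, hxa⟩

namespace Matroid

open Set

variable {α : Type*} {M : Matroid α} {A B C C₁ C₂ X : Set α} {a f : α}

lemma eq_disjointSum_of_forall_isCircuit (hAB : A ∪ B = M.E) (hdj : Disjoint A B)
    (h : ∀ C, M.IsCircuit C → C ⊆ A ∨ C ⊆ B) :
    M = (M ↾ A).disjointSum (M ↾ B) hdj := by
  refine ext_indep (hAB.symm.trans (disjointSum_ground_eq (M := M ↾ A) (N := M ↾ B)).symm)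
    fun I hI ↦ Iff.trans ?_ disjointSum_indep_iff.symm
  simp only [restrict_indep_iff, restrict_ground_eq, hAB]
  refine ⟨fun hi ↦ ⟨⟨hi.subset inter_subset_left, inter_subset_right⟩,
    ⟨hi.subset inter_subset_left, inter_subset_right⟩, hI⟩, ?_⟩
  rintro ⟨⟨hA, -⟩, ⟨hB, -⟩, -⟩
  refine (indep_iff_forall_subset_not_isCircuit hI).2 fun C hCI hC ↦ ?_
  rcases h C hC with hCA | hCB
  · exact hC.not_indep (hA.subset (subset_inter hCI hCA))
  · exact hC.not_indep (hB.subset (subset_inter hCI hCB))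

lemma IsCircuit.subset_or_subset_of_disjointSum {N₁ N₂ : Matroid α} {hd : Disjoint N₁.E N₂.E}
    (hC : (N₁.disjointSum N₂ hd).IsCircuit C) : C ⊆ N₁.E ∨ C ⊆ N₂.E := by
  by_contra! h
  have hind (N : Matroid α) (hN : ¬ C ⊆ N.E) : (N₁.disjointSum N₂ hd).Indep (C ∩ N.E) :=
    hC.ssubset_indep (inter_subset_left.ssubset_of_ne fun h ↦ hN (h ▸ inter_subset_right))
  have h₁ := (disjointSum_indep_iff.1 (hind N₁ h.1)).1
  have h₂ := (disjointSum_indep_iff.1 (hind N₂ h.2)).2.1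
  rw [inter_assoc, inter_self] at h₁ h₂
  exact hC.not_indep <| disjointSum_indep_iff.2
    ⟨h₁, h₂, hC.subset_ground.trans disjointSum_ground_eq.subset⟩

lemma mem_closure_inter_of_forall_isCircuit (hdj : Disjoint A B)
    (h : ∀ C, M.IsCircuit C → C ⊆ A ∨ C ⊆ B) (haA : a ∈ A) (ha : a ∈ M.closure X) :
    a ∈ M.closure (X ∩ A) := by
  by_cases haX : a ∈ X
  · exact mem_closure_of_mem' _ ⟨haX, haA⟩ (mem_ground_of_mem_closure ha)
  obtain ⟨D, hDX, hD, haD⟩ := exists_isCircuit_of_mem_closure ha haX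
  have hDA : D ⊆ A := (h D hD).resolve_right fun hDB ↦ hdj.notMem_of_mem_left haA (hDB haD)
  refine (mem_closure_iff_exists_isCircuit fun h ↦ haX h.1).2 ⟨D, fun x hx ↦ ?_, hD, haD⟩
  obtain rfl | hxX := hDX hx
  · exact mem_insert _ _
  · exact mem_insert_of_mem _ ⟨hxX, hDA hx⟩

lemma IsCircuit.nontrivial_of_isNonloop (hC : M.IsCircuit C) (hf : M.IsNonloop f)
    (hfC : f ∈ C) : C.Nontrivial :=
  (nontrivial_iff_ne_singleton hfC).2 fun h ↦ hf.not_isLoop (singleton_isCircuit.1 (h ▸ hC))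

lemma IsCircuit.subset_insert_or_subset_insert (hf : M.IsNonloop f)
    (hsep : ∀ D, (M ／ {f}).IsCircuit D → D ⊆ A ∨ D ⊆ B) (hC : M.IsCircuit C) (hfC : f ∈ C) :
    C ⊆ insert f A ∨ C ⊆ insert f B := by
  simpa only [sdiff_singleton_subset_iff] using
    hsep _ (hC.contractElem_isCircuit (hC.nontrivial_of_isNonloop hf hfC) hfC)

lemma IsCircuit.mem_closure_inter (hdj : Disjoint A B)
    (hsep : ∀ D, (M ／ {f}).IsCircuit D → D ⊆ A ∨ D ⊆ B) (hC : M.IsCircuit C) (hfC : f ∉ C)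
    (hCA : (C ∩ A).Nonempty) (hCB : (C ∩ B).Nonempty) : f ∈ M.closure (C ∩ A) := by
  obtain ⟨c, hc⟩ := hCA
  obtain ⟨b, hbC, hbB⟩ := hCB
  have hind : M.Indep (C ∩ A) := hC.ssubset_indep <| inter_subset_left.ssubset_of_ne fun h ↦
    hdj.notMem_of_mem_right hbB (h.ge hbC).2
  have hcN : c ∈ (M ／ {f}).closure (C \ {c}) := by
    rw [contract_closure_eq]
    exact ⟨M.closure_subset_closure subset_union_left
      (hC.mem_closure_sdiff_singleton_of_mem hc.1), fun h ↦ hfC (h ▸ hc.1)⟩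
  have hcA := mem_closure_inter_of_forall_isCircuit hdj hsep hc.2 hcN
  rw [contract_closure_eq, union_singleton, sdiff_inter_right_comm] at hcA
  -- `c` is spanned by `(C ∩ A) - c` together with `f`, but not without `f`: exchange them.
  have := mem_closure_insert (hind.notMem_closure_sdiff_of_mem hc) hcA.1
  rwa [insert_sdiff_singleton, insert_eq_of_mem hc] at this

lemma IsCircuit.insert_inter_isCircuit (hf : M.IsNonloop f) (hdj : Disjoint A B)
    (hsep : ∀ D, (M ／ {f}).IsCircuit D → D ⊆ A ∨ D ⊆ B) (hC : M.IsCircuit C) (hfC : f ∉ C)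
    (hCA : (C ∩ A).Nonempty) (hCB : (C ∩ B).Nonempty) : M.IsCircuit (insert f (C ∩ A)) := by
  obtain ⟨K₁, hK₁, hK₁C, hfK₁⟩ :=
    exists_isCircuit_of_mem_closure (hC.mem_closure_inter hdj hsep hfC hCA hCB) fun h ↦ hfC h.1
  obtain ⟨K₂, hK₂, hK₂C, hfK₂⟩ := exists_isCircuit_of_mem_closure
    (hC.mem_closure_inter hdj.symm (fun D hD ↦ (hsep D hD).symm) hfC hCB hCA) fun h ↦ hfC h.1
  have hne : K₁ ≠ K₂ := by
    rintro rfl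
    obtain ⟨x, hxK, hxf⟩ := (hK₁C.nontrivial_of_isNonloop hf hfK₁).exists_ne f
    exact hdj.notMem_of_mem_left ((hK₁ hxK).resolve_left hxf).2 ((hK₂ hxK).resolve_left hxf).2
  suffices h : C ∩ A ⊆ K₁ from subset_antisymm hK₁ (insert_subset hfK₁ h) ▸ hK₁C
  intro x hx
  by_contra hxK
  obtain ⟨K, hK, hKC⟩ := hK₁C.elimination hK₂C hne f
  refine hKC.not_indep ((hC.sdiff_singleton_indep hx.1).subset fun y hy ↦ ?_)
  obtain ⟨hy₁ | hy₂, hyf⟩ := hK hy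
  · exact ⟨((hK₁ hy₁).resolve_left hyf).1, fun h ↦ hxK (h ▸ hy₁)⟩
  · have hy := (hK₂ hy₂).resolve_left hyf
    exact ⟨hy.1, fun h ↦ hdj.notMem_of_mem_left hx.2 (h ▸ hy.2)⟩

lemma isCircuit_union_sdiff_singleton (hf : M.IsNonloop f) (hdj : Disjoint A B)
    (hsep : ∀ D, (M ／ {f}).IsCircuit D → D ⊆ A ∨ D ⊆ B) (hC₁ : M.IsCircuit C₁)
    (hC₂ : M.IsCircuit C₂) (hfC₁ : f ∈ C₁) (hfC₂ : f ∈ C₂) (hC₁A : C₁ ⊆ insert f A)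
    (hC₂B : C₂ ⊆ insert f B) : M.IsCircuit ((C₁ ∪ C₂) \ {f}) := by
  have hne : C₁ ≠ C₂ := by
    rintro rfl
    obtain ⟨x, hxC, hxf⟩ := (hC₁.nontrivial_of_isNonloop hf hfC₁).exists_ne f
    exact hdj.notMem_of_mem_left ((hC₁A hxC).resolve_left hxf) ((hC₂B hxC).resolve_left hxf)
  obtain ⟨C, hCC, hC⟩ := hC₁.elimination hC₂ hne f
  have hfC : f ∉ C := fun h ↦ (hCC h).2 rfl
  have hmem y (hy : y ∈ C) : y ∈ C₁ ∩ A ∨ y ∈ C₂ ∩ B := by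
    obtain ⟨h₁ | h₂, hyf⟩ := hCC hy
    · exact .inl ⟨h₁, (hC₁A h₁).resolve_left hyf⟩
    · exact .inr ⟨h₂, (hC₂B h₂).resolve_left hyf⟩
  have hCA : (C ∩ A).Nonempty := by
    by_contra! h
    exact hC.not_indep <| (hC₂.sdiff_singleton_indep hfC₂).subset fun y hy ↦
      ⟨((hmem y hy).resolve_left fun h' ↦ h.subset ⟨hy, h'.2⟩).1, ne_of_mem_of_not_mem hy hfC⟩
  have hCB : (C ∩ B).Nonempty := by
    by_contra! h
    exact hC.not_indep <| (hC₁.sdiff_singleton_indep hfC₁).subset fun y hy ↦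
      ⟨((hmem y hy).resolve_right fun h' ↦ h.subset ⟨hy, h'.2⟩).1, ne_of_mem_of_not_mem hy hfC⟩
  have e₁ : insert f (C ∩ A) = C₁ :=
    (hC.insert_inter_isCircuit hf hdj hsep hfC hCA hCB).eq_of_subset_isCircuit hC₁ <|
      insert_subset hfC₁ fun y hy ↦
        ((hmem y hy.1).resolve_right fun h ↦ hdj.notMem_of_mem_left hy.2 h.2).1
  have e₂ : insert f (C ∩ B) = C₂ :=
    (hC.insert_inter_isCircuit hf hdj.symm (fun D hD ↦ (hsep D hD).symm) hfC hCB hCA)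
      |>.eq_of_subset_isCircuit hC₂ <| insert_subset hfC₂ fun y hy ↦
        ((hmem y hy.1).resolve_left fun h ↦ hdj.notMem_of_mem_left h.2 hy.2).1
  refine subset_antisymm hCC ?_ ▸ hC
  rintro y ⟨hy₁ | hy₂, hyf⟩
  · exact ((e₁ ▸ hy₁ : y ∈ insert f (C ∩ A)).resolve_left hyf).1
  · exact ((e₂ ▸ hy₂ : y ∈ insert f (C ∩ B)).resolve_left hyf).1

lemma IsCircuit.subset_or_subset_or_eq_union_sdiff (hf : M.IsNonloop f)
    (hAB : A ∪ B = M.E \ {f}) (hdj : Disjoint A B)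
    (hsep : ∀ D, (M ／ {f}).IsCircuit D → D ⊆ A ∨ D ⊆ B) (hC : M.IsCircuit C) :
    C ⊆ insert f A ∨ C ⊆ insert f B ∨ ∃ C₁ C₂, M.IsCircuit C₁ ∧ M.IsCircuit C₂ ∧
      f ∈ C₁ ∧ f ∈ C₂ ∧ C₁ ⊆ insert f A ∧ C₂ ⊆ insert f B ∧ C = (C₁ ∪ C₂) \ {f} := by
  by_cases hfC : f ∈ C
  · exact (hC.subset_insert_or_subset_insert hf hsep hfC).imp_right .inl
  have hCAB : C ⊆ A ∪ B := hAB ▸ subset_sdiff_singleton hC.subset_ground hfC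
  by_cases hCA : (C ∩ A).Nonempty
  swap
  · exact .inr <| .inl fun y hy ↦
      mem_insert_of_mem _ ((hCAB hy).resolve_left fun hyA ↦ hCA ⟨y, hy, hyA⟩)
  by_cases hCB : (C ∩ B).Nonempty
  swap
  · exact .inl fun y hy ↦
      mem_insert_of_mem _ ((hCAB hy).resolve_right fun hyB ↦ hCB ⟨y, hy, hyB⟩)
  refine .inr (.inr ⟨_, _, hC.insert_inter_isCircuit hf hdj hsep hfC hCA hCB,
    hC.insert_inter_isCircuit hf hdj.symm (fun D hD ↦ (hsep D hD).symm) hfC hCB hCA,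
    mem_insert _ _, mem_insert _ _, insert_subset_insert inter_subset_right,
    insert_subset_insert inter_subset_right, ?_⟩)
  rw [← insert_union_distrib, ← inter_union_distrib_left, inter_eq_left.2 hCAB,
    insert_sdiff_self_of_notMem hfC]

end Matroid

namespace SPPaper

open Set Matroid

universe u

variable {α : Type u} {M : Matroid α} {A B C : Set α} {e f : α}

lemma isCircuit_iff_isCircuit : IsCircuit M C ↔ M.IsCircuit C :=
  isCircuit_iff_forall_ssubset.symm

lemma isLoop_iff_isLoop : IsLoop M e ↔ M.IsLoop e :=
  ⟨fun h ↦ (singleton_not_indep h.1).1 h.2, fun h ↦ ⟨h.mem_ground, (singleton_not_indep).2 h⟩⟩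

lemma isColoop_iff_isColoop : IsColoop M e ↔ M.IsColoop e :=
  ⟨fun h ↦ isColoop_iff_forall_mem_isBase.2 h.2,
    fun h ↦ ⟨h.mem_ground, fun _ ↦ h.mem_of_isBase⟩⟩

lemma Connected.not_forall_isCircuit_subset_or_subset (hM : Connected M) (hA : A.Nonempty)
    (hB : B.Nonempty) (hAB : A ∪ B = M.E) (hdj : Disjoint A B) :
    ¬ ∀ C, M.IsCircuit C → C ⊆ A ∨ C ⊆ B :=
  fun h ↦ hM.2 ⟨M ↾ A, M ↾ B, hA, hB, hdj, eq_disjointSum_of_forall_isCircuit hAB hdj h⟩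

lemma exists_separation_of_not_connected (hE : M.E.Nonempty) (hM : ¬ Connected M) :
    ∃ A B, A.Nonempty ∧ B.Nonempty ∧ A ∪ B = M.E ∧ Disjoint A B ∧
      ∀ C, M.IsCircuit C → C ⊆ A ∨ C ⊆ B := by
  obtain ⟨N₁, N₂, h₁, h₂, hd, rfl⟩ := not_not.1 (not_and.1 hM hE)
  exact ⟨N₁.E, N₂.E, h₁, h₂, disjointSum_ground_eq.symm, hd,
    fun C hC ↦ hC.subset_or_subset_of_disjointSum⟩

lemma Connected.isNonloop (hM : Connected M) (hnt : M.E.Nontrivial) (he : e ∈ M.E) :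
    M.IsNonloop e := by
  by_contra hloop
  rw [not_isNonloop_iff] at hloop
  refine hM.not_forall_isCircuit_subset_or_subset (singleton_nonempty e)
    (hnt.sdiff_singleton_nonempty e) (union_sdiff_cancel (singleton_subset_iff.2 he))
    disjoint_sdiff_right fun C hC ↦ ?_
  by_cases heC : e ∈ C
  · exact .inl (hloop.eq_of_isCircuit_mem hC heC).subset
  · exact .inr (subset_sdiff_singleton hC.subset_ground heC)

lemma Connected.mem_closure_of_contract_separation (hM : Connected M) (hf : M.IsNonloop f)
    (hAB : A ∪ B = M.E \ {f}) (hdj : Disjoint A B)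
    (hsep : ∀ D, (M ／ {f}).IsCircuit D → D ⊆ A ∨ D ⊆ B) (hA : A.Nonempty) :
    f ∈ M.closure A := by
  by_contra hfA
  have hfA' : f ∉ A := fun h ↦ (hAB.subset (subset_union_left h)).2 rfl
  have hA' C (hC : M.IsCircuit C) (hCA : C ⊆ insert f A) : C ⊆ A := by
    refine (subset_insert_iff_of_notMem fun hfC ↦ hfA ?_).1 hCA
    exact M.closure_subset_closure (sdiff_singleton_subset_iff.2 hCA)
      (hC.mem_closure_sdiff_singleton_of_mem hfC)
  refine hM.not_forall_isCircuit_subset_or_subset hA (insert_nonempty f B) ?_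
    (disjoint_insert_right.2 ⟨hfA', hdj⟩) fun C hC ↦ ?_
  · rw [union_insert, hAB, insert_sdiff_singleton, insert_eq_of_mem hf.mem_ground]
  obtain h | h | ⟨C₁, -, hC₁, -, hfC₁, -, hC₁A, -, -⟩ :=
    hC.subset_or_subset_or_eq_union_sdiff hf hAB hdj hsep
  · exact .inl (hA' C hC h)
  · exact .inr h
  · exact absurd (hA' C₁ hC₁ hC₁A hfC₁) hfA'

lemma isParallelConn_restrict_insert (hf : M.IsNonloop f) (hAB : A ∪ B = M.E \ {f})
    (hdj : Disjoint A B) (hsep : ∀ D, (M ／ {f}).IsCircuit D → D ⊆ A ∨ D ⊆ B)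
    (hfA : f ∈ M.closure A) (hfB : f ∈ M.closure B) :
    IsParallelConn M (M ↾ insert f A) (M ↾ insert f B) f := by
  have hA : A ⊆ M.E \ {f} := hAB ▸ subset_union_left
  have hB : B ⊆ M.E \ {f} := hAB ▸ subset_union_right
  have hAE : insert f A ⊆ M.E := insert_subset hf.mem_ground (hA.trans sdiff_subset)
  have hBE : insert f B ⊆ M.E := insert_subset hf.mem_ground (hB.trans sdiff_subset)
  have not_loop (X : Set α) : ¬ IsLoop (M ↾ insert f X) f := by
    simp [isLoop_iff_isLoop, hf.not_isLoop, hf.mem_ground]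
  have not_coloop (X : Set α) (hX : X ⊆ M.E \ {f}) (hfX : f ∈ M.closure X) :
      ¬ IsColoop (M ↾ insert f X) f := by
    obtain ⟨K, hKX, hK, hfK⟩ := exists_isCircuit_of_mem_closure hfX fun h ↦ (hX h).2 rfl
    rw [isColoop_iff_isColoop]
    exact (hK.isCircuit_restrict_of_subset hKX).not_isColoop_of_mem hfK
  unfold IsParallelConn
  rw [if_neg (not_loop A), if_neg (not_coloop A hA hfA), if_neg (not_loop B),
    if_neg (not_coloop B hB hfB)]
  refine ⟨?_, fun C ↦ ?_⟩
  · rw [restrict_ground_eq, restrict_ground_eq, ← insert_union_distrib, hAB,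
      insert_sdiff_singleton, insert_eq_of_mem hf.mem_ground]
  simp only [PConnCircuit, isCircuit_iff_isCircuit, restrict_isCircuit_iff hAE,
    restrict_isCircuit_iff hBE]
  constructor
  · intro hC
    obtain h | h | ⟨C₁, C₂, hC₁, hC₂, hf₁, hf₂, h₁, h₂, rfl⟩ :=
      hC.subset_or_subset_or_eq_union_sdiff hf hAB hdj hsep
    exacts [.inl ⟨hC, h⟩, .inr (.inl ⟨hC, h⟩),
      .inr (.inr ⟨C₁, C₂, ⟨hC₁, h₁⟩, ⟨hC₂, h₂⟩, hf₁, hf₂, rfl⟩)]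
  · rintro (⟨hC, -⟩ | ⟨hC, -⟩ | ⟨C₁, C₂, ⟨hC₁, h₁⟩, ⟨hC₂, h₂⟩, hf₁, hf₂, rfl⟩)
    exacts [hC, hC, isCircuit_union_sdiff_singleton hf hdj hsep hC₁ hC₂ hf₁ hf₂ h₁ h₂]

lemma contract_isCircuit_subset_or_subset_of_hasCircuits {M₁ M₂ : Matroid α} {D : Set α}
    (hf : M.IsNonloop f) (hE : M₁.E ∩ M₂.E = {f})
    (hP : HasCircuits M (M₁.E ∪ M₂.E) (PConnCircuit M₁ M₂ f)) (hD : (M ／ {f}).IsCircuit D) :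
    D ⊆ M₁.E \ {f} ∨ D ⊆ M₂.E \ {f} := by
  have hfD : f ∉ D := fun h ↦ (hD.subset_ground h).2 rfl
  obtain ⟨C, hC, hDC, hCD⟩ := hD.exists_subset_isCircuit_of_contract
  obtain h₁ | h₂ | ⟨C₁, C₂, hC₁, hC₂, hf₁, hf₂, rfl⟩ := (hP.2 C).1 (isCircuit_iff_isCircuit.2 hC)
  · exact .inl (subset_sdiff_singleton (hDC.trans h₁.1.subset_ground) hfD)
  · exact .inr (subset_sdiff_singleton (hDC.trans h₂.1.subset_ground) hfD)
  exfalso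
  have hCD' : (C₁ ∪ C₂) \ {f} ⊆ D := fun x hx ↦ (hCD hx).resolve_right hx.2
  have hC₁M := isCircuit_iff_isCircuit.1 ((hP.2 C₁).2 (.inl hC₁))
  have hC₂M := isCircuit_iff_isCircuit.1 ((hP.2 C₂).2 (.inr (.inl hC₂)))
  have e₂ : C₂ \ {f} = D :=
    (hC₂M.contractElem_isCircuit (hC₂M.nontrivial_of_isNonloop hf hf₂) hf₂).eq_of_subset_isCircuit
      hD ((sdiff_subset_sdiff_left subset_union_right).trans hCD')
  obtain ⟨x, hx⟩ := (hC₁M.nontrivial_of_isNonloop hf hf₁).sdiff_singleton_nonempty f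
  have hx₂ : x ∈ C₂ \ {f} := e₂ ▸ hCD' ⟨.inl hx.1, hx.2⟩
  exact hx.2 (hE.subset ⟨hC₁.1.subset_ground hx.1, hC₂.1.subset_ground hx₂.1⟩)

lemma not_connected_contract_of_isParallelConn {M₁ M₂ : Matroid α} (hM : Connected M)
    (hf : M.IsNonloop f) (hE : M₁.E ∩ M₂.E = {f}) (h₁ : M₁.E.Nontrivial) (h₂ : M₂.E.Nontrivial)
    (hP : IsParallelConn M M₁ M₂ f) : ¬ Connected (M ／ {f}) := by
  have not_dirSum (N₁ N₂ : Matroid α) (h₁ : N₁.E.Nonempty) (h₂ : N₂.E.Nonempty) :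
      ¬ IsDirSumOf M N₁ N₂ :=
    fun h ↦ hM.2 ⟨N₁, N₂, h₁, h₂, h⟩
  unfold IsParallelConn at hP
  split_ifs at hP
  · exact absurd hP (not_dirSum _ _ h₁.nonempty (h₂.sdiff_singleton_nonempty f))
  · exact absurd hP (not_dirSum _ _ (h₁.sdiff_singleton_nonempty f) h₂.nonempty)
  · exact absurd hP (not_dirSum _ _ (h₁.sdiff_singleton_nonempty f) h₂.nonempty)
  · exact absurd hP (not_dirSum _ _ h₁.nonempty (h₂.sdiff_singleton_nonempty f))
  refine fun hc ↦ hc.not_forall_isCircuit_subset_or_subset (h₁.sdiff_singleton_nonempty f)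
    (h₂.sdiff_singleton_nonempty f) ?_ ?_ fun D hD ↦
      contract_isCircuit_subset_or_subset_of_hasCircuits hf hE hP hD
  · rw [contract_ground, hP.1, union_sdiff_distrib]
  · exact disjoint_left.2 fun x hx₁ hx₂ ↦ hx₁.2 (hE.subset ⟨hx₁.1, hx₂.1⟩)

/-- a non-trivial connected matroid is parallel irreducible at `f` iff
`M/f` is connected. -/
theorem stmt8 (M : Matroid α) (f : α) (hf : f ∈ M.E)
    (hnt : M.E.Nontrivial) (hconn : Connected M) :
    ParallelIrreducibleAt M f ↔ Connected (con M {f}) := by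
  have hfM : M.IsNonloop f := hconn.isNonloop hnt hf
  refine ⟨fun hirr ↦ ?_, fun hcon ↦ .inr ?_⟩
  · by_contra hcon
    obtain ⟨A, B, hA, hB, hAB, hdj, hsep⟩ :=
      exists_separation_of_not_connected (M := M ／ {f}) (hnt.sdiff_singleton_nonempty f) hcon
    rw [contract_ground] at hAB
    have hsep' D (hD : (M ／ {f}).IsCircuit D) : D ⊆ B ∨ D ⊆ A := (hsep D hD).symm
    have hBA : B ∪ A = M.E \ {f} := union_comm B A ▸ hAB
    have hnt_insert (X : Set α) (hX : X.Nonempty) (hXE : X ⊆ M.E \ {f}) :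
        (insert f X).Nontrivial :=
      let ⟨x, hx⟩ := hX
      nontrivial_of_mem_mem_ne (mem_insert f X) (mem_insert_of_mem f hx) fun h ↦ (hXE hx).2 h.symm
    refine hirr.resolve_left hnt.not_subsingleton ⟨_, _, ?_,
      hnt_insert A hA (hAB ▸ subset_union_left), hnt_insert B hB (hAB ▸ subset_union_right),
      isParallelConn_restrict_insert hfM hAB hdj hsep
        (hconn.mem_closure_of_contract_separation hfM hAB hdj hsep hA)
        (hconn.mem_closure_of_contract_separation hfM hBA hdj.symm hsep' hB)⟩
    rw [restrict_ground_eq, restrict_ground_eq, ← insert_inter_distrib, hdj.inter_eq,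
      insert_empty_eq]
  · rintro ⟨M₁, M₂, hE, h₁, h₂, hP⟩
    exact not_connected_contract_of_isParallelConn hconn hfM hE h₁ h₂ hP hcon

end SPPaper
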